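/- Let F: ℝⁿ ⇉ ℝⁿ have convex graph and let (u,v) ∈ gph F with v ∈ F_A(u; v*). Then the locally adjoint mapping satisfies F*(v*; (u,v)) = ∂H_F(u, v*), where ∂ denotes the superdifferential of the concave function u ↦ H_F(u, v*), i.e., ∂H_F(u, v*) = {u* : H_F(ũ, v*) − H_F(u, v*) ≤ ⟨u*, ũ − u⟩ ∀ũ}. -/

import Mathlib

open RealInnerProductSpace

/-- Hamiltonian of a set-valued mapping, with values in the extended reals. -/
noncomputable def HamE {n : ℕ} (F : EuclideanSpace ℝ (Fin n) → Set (EuclideanSpace ℝ (Fin n)))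
    (u vs : EuclideanSpace ℝ (Fin n)) : EReal :=
  sSup ((fun v => ((⟪v, vs⟫ : ℝ) : EReal)) '' F u)

/-- `coneOf A` = positive scalar multiples of elements of `A`. -/
def coneOf {X : Type*} [SMul ℝ X] (A : Set X) : Set X :=
  {z | ∃ μ : ℝ, 0 < μ ∧ ∃ a ∈ A, z = μ • a}

/-! The dual cone of `coneOf A` is the dual cone of `A`; together with `v` attaining the
Hamiltonian at `u`, this turns the dual-cone inequality at a graph point `(ũ, ṽ)` into
`⟪ṽ, v*⟫ ≤ H_F(u, v*) + ⟪u*, ũ - u⟫`, whose supremum over `ṽ ∈ F ũ` is the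
superdifferential inequality. -/

theorem forall_mem_coneOf_nonneg_iff {X : Type*} [MulAction ℝ X] (A : Set X) (f : X → ℝ)
    (hf : ∀ μ : ℝ, ∀ x, f (μ • x) = μ * f x) :
    (∀ w ∈ coneOf A, 0 ≤ f w) ↔ ∀ a ∈ A, 0 ≤ f a := by
  constructor
  · intro h a ha
    simpa using h a ⟨1, one_pos, a, ha, (one_smul ℝ a).symm⟩
  · rintro h _ ⟨μ, hμ, a, ha, rfl⟩
    rw [hf]
    exact mul_nonneg hμ.le (h a ha)

theorem HamE_le_iff {n : ℕ} (F : EuclideanSpace ℝ (Fin n) → Set (EuclideanSpace ℝ (Fin n)))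
    (u vs : EuclideanSpace ℝ (Fin n)) (c : EReal) :
    HamE F u vs ≤ c ↔ ∀ v ∈ F u, ((⟪v, vs⟫ : ℝ) : EReal) ≤ c :=
  sSup_le_iff.trans Set.forall_mem_image

theorem stmt3_general {n : ℕ} (F : EuclideanSpace ℝ (Fin n) → Set (EuclideanSpace ℝ (Fin n)))
    (u v vs : EuclideanSpace ℝ (Fin n))
    (hargmax : ((⟪v, vs⟫ : ℝ) : EReal) = HamE F u vs) :
    {us : EuclideanSpace ℝ (Fin n) |
        ∀ w ∈ coneOf ((fun p => p - (u, v)) ''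
          {p : EuclideanSpace ℝ (Fin n) × EuclideanSpace ℝ (Fin n) | p.2 ∈ F p.1}),
        0 ≤ (⟪w.1, us⟫ : ℝ) + ⟪w.2, -vs⟫} =
      {us : EuclideanSpace ℝ (Fin n) | ∀ ut : EuclideanSpace ℝ (Fin n),
        HamE F ut vs ≤ HamE F u vs + ((⟪us, ut - u⟫ : ℝ) : EReal)} := by
  ext us
  have homogeneous : ∀ μ : ℝ, ∀ w : EuclideanSpace ℝ (Fin n) × EuclideanSpace ℝ (Fin n),
      ⟪(μ • w).1, us⟫ + ⟪(μ • w).2, -vs⟫ = μ * (⟪w.1, us⟫ + ⟪w.2, -vs⟫) := by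
    intro μ w
    simp only [Prod.smul_fst, Prod.smul_snd, real_inner_smul_left, mul_add]
  refine (forall_mem_coneOf_nonneg_iff _
    (fun w : EuclideanSpace ℝ (Fin n) × EuclideanSpace ℝ (Fin n) => ⟪w.1, us⟫ + ⟪w.2, -vs⟫)
    homogeneous).trans ?_
  simp only [Set.forall_mem_image, Prod.forall, ← hargmax, ← EReal.coe_add,
    HamE_le_iff, EReal.coe_le_coe_iff, Prod.fst_sub, Prod.snd_sub]
  refine forall_congr' fun ut => forall₂_congr fun v' _ => ?_
  rw [real_inner_comm us (ut - u)]
  simp only [inner_sub_left, inner_neg_right]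
  constructor <;> intro <;> linarith

/-- For a convex set-valued mapping `F` with `v ∈ F_A(u; v*)`, the locally adjoint mapping
`F*(v*; (u,v)) = {u* : (u*, −v*) ∈ K_F*(u,v)}` coincides with the superdifferential of the
concave function `u ↦ H_F(u, v*)` at `u`. -/
theorem stmt3 {n : ℕ} (F : EuclideanSpace ℝ (Fin n) → Set (EuclideanSpace ℝ (Fin n)))
    (hF : Convex ℝ {p : EuclideanSpace ℝ (Fin n) × EuclideanSpace ℝ (Fin n) | p.2 ∈ F p.1})
    (u v vs : EuclideanSpace ℝ (Fin n)) (hv : v ∈ F u)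
    (hargmax : ((⟪v, vs⟫ : ℝ) : EReal) = HamE F u vs) :
    {us : EuclideanSpace ℝ (Fin n) |
        ∀ w ∈ coneOf ((fun p => p - (u, v)) ''
          {p : EuclideanSpace ℝ (Fin n) × EuclideanSpace ℝ (Fin n) | p.2 ∈ F p.1}),
        0 ≤ (⟪w.1, us⟫ : ℝ) + ⟪w.2, -vs⟫} =
      {us : EuclideanSpace ℝ (Fin n) | ∀ ut : EuclideanSpace ℝ (Fin n),
        HamE F ut vs ≤ HamE F u vs + ((⟪us, ut - u⟫ : ℝ) : EReal)} :=
  stmt3_general F u v vs hargmax
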